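/- Uniform disk lemma: let r = (R_j)_{j≥1} be a generic sequence of radii, and let m = (m_j)_{j≥1}, ℓ = (ℓ_j)_{j≥2} be sequences of positive integers such that condition (3.2) at k holds for every k ≥ 1; let α be the itinerary associated to m and ℓ. If there exist a point x ∈ ℂ_p and a parameter c ∈ C(r) such that x lies in the cylinder C_c(α), then every y ∈ ℂ_p with |y − x| < ϱ² also lies in C_c(α). -/

import Mathlib

noncomputable section

/-- `K` is a model of `ℂ_p`, the completion of an algebraic closure of `ℚ_p`:
it is a complete, algebraically closed, nonarchimedean normed field whose norm
extends the `p`-adic absolute value and in which the algebraic elements over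
`ℚ_p` are dense. -/
structure IsCp (p : ℕ) [Fact p.Prime] (K : Type*) [NormedField K] [Algebra ℚ_[p] K] : Prop where
  complete : CompleteSpace K
  norm_extends : ∀ x : ℚ_[p], ‖algebraMap ℚ_[p] K x‖ = ‖x‖
  isAlgClosed : IsAlgClosed K
  dense_algebraic : Dense {x : K | IsAlgebraic ℚ_[p] x}
  isNonarch : ∀ x y : K, ‖x + y‖ ≤ max ‖x‖ ‖y‖

/-- `ϱ = p^{-1/(p-1)}`. -/
def rho (p : ℕ) : ℝ := (p : ℝ) ^ (-1 / ((p : ℝ) - 1))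

/-- `R` is a sequence of radii: strictly increasing (for indices `≥ 1`),
with `R 1 > p`, tending to infinity. -/
def IsRadii (p : ℕ) (R : ℕ → ℝ) : Prop :=
  (∀ j, 1 ≤ j → R j < R (j + 1)) ∧ (p : ℝ) < R 1 ∧
    Filter.Tendsto R Filter.atTop Filter.atTop

/-- The piecewise-monomial map `φ`: for `R_{j-1} < t ≤ R_j` (with `R_0 := 0`),
`φ(t) = p (R_1 ⋯ R_{j-1})⁻¹ t^{p+j-1}`. -/
def phi (p : ℕ) (R : ℕ → ℝ) (t : ℝ) : ℝ :=
  let j := sInf {j : ℕ | 1 ≤ j ∧ t ≤ R j}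
  (p : ℝ) * (∏ i ∈ Finset.Icc 1 (j - 1), R i)⁻¹ * t ^ (p + j - 1)

/-- A generic sequence of radii. -/
def IsGenericRadii (p : ℕ) (R : ℕ → ℝ) : Prop :=
  IsRadii p R ∧ ∀ i j n : ℕ, 1 ≤ i → i < j → 1 ≤ n → (phi p R)^[n] (R i) ≠ R j

/-- Membership in the parameter space `C(r)`: `|c_j| = R_j` for all `j ≥ 1`. -/
def InC (p : ℕ) [Fact p.Prime] {K : Type*} [NormedField K] (R : ℕ → ℝ) (c : ℕ → K) : Prop :=
  ∀ j, 1 ≤ j → ‖c j‖ = R j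

/-- The transcendental entire map `f_c(z) = (z^p/p) ∏_{j ≥ 1} (1 - z/c_j)`. -/
def fc (p : ℕ) {K : Type*} [NormedField K] (c : ℕ → K) (z : K) : K :=
  z ^ p / (p : K) * ∏' j : ℕ, (1 - z / c (j + 1))

/-- The disk `B_0 = {|z| < 1}` for `j = 0`, and `B_j = {|z - c_j| < R_j}` for `j ≥ 1`. -/
def Bset {K : Type*} [NormedField K] (R : ℕ → ℝ) (c : ℕ → K) (j : ℕ) : Set K :=
  if j = 0 then {z : K | ‖z‖ < 1} else {z : K | ‖z - c j‖ < R j}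

/-- The set `A`, complement of all the disks `B_j`, `j ≥ 0`. -/
def Aset {K : Type*} [NormedField K] (R : ℕ → ℝ) (c : ℕ → K) : Set K :=
  (⋃ j, Bset R c j)ᶜ

/-- `n_j`, the minimal `n ≥ 1` with `R_j < φ^{∘(n+1)}(1)`. -/
def nseq (p : ℕ) (R : ℕ → ℝ) (j : ℕ) : ℕ :=
  sInf {n : ℕ | 1 ≤ n ∧ R j < (phi p R)^[n + 1] 1}

/-- `S_j = φ⁻¹(R_j)`. -/
def Sse (p : ℕ) (R : ℕ → ℝ) (j : ℕ) : ℝ := Function.invFun (phi p R) (R j)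

/-- `λ_j = φ(R_j)/R_j`. -/
def lam (p : ℕ) (R : ℕ → ℝ) (j : ℕ) : ℝ := phi p R (R j) / R j

/-- `L_k`: index of the first symbol of the `k`-th block `B_0^{m_k} A^{n_k} B_k^{…}`
of the itinerary `α(m, ℓ)`; `L_1 = 0` and `L_{k+1} = L_k + m_k + n_k + ℓ_{k+1}`. -/
def Lseq (m n l : ℕ → ℕ) : ℕ → ℕ
  | 0 => 0
  | 1 => 0
  | k + 2 => Lseq m n l (k + 1) + m (k + 1) + n (k + 1) + l (k + 2)

/-- `N_k = L_k + m_k + n_k`, the index of the final symbol `B_k` of the truncated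
itinerary `α^{(k)}` (so `α^{(k)}` has length `N_k + 1`). -/
def Nseq (m n l : ℕ → ℕ) (k : ℕ) : ℕ := Lseq m n l k + m k + n k

/-- The symbol (`some 0 = B_0`, `none = A`, `some k = B_k`) at position `i` of the
itinerary `α(m,ℓ) = B_0^{m_1} A^{n_1} B_1^{ℓ_2} B_0^{m_2} A^{n_2} B_2^{ℓ_3} ⋯`. -/
def itin (m n l : ℕ → ℕ) (i : ℕ) : Option ℕ :=
  let k := sSup {k : ℕ | 1 ≤ k ∧ Lseq m n l k ≤ i}
  if i < Lseq m n l k + m k then some 0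
  else if i < Lseq m n l k + m k + n k then none
  else some k

/-- The subset of `ℂ_p` corresponding to a symbol of the alphabet `{A, B_0, B_1, …}`. -/
def symbSet {K : Type*} [NormedField K] (R : ℕ → ℝ) (c : ℕ → K) : Option ℕ → Set K
  | none => Aset R c
  | some j => Bset R c j

/-- Condition (3.2) at `k`: `ϱ⁻¹ R_k p^{-m_k} λ_k^{ℓ_{k+1}} < 1`. -/
def Cond32 (p : ℕ) (R : ℕ → ℝ) (m l : ℕ → ℕ) (k : ℕ) : Prop :=
  (rho p)⁻¹ * R k * ((p : ℝ) ^ m k)⁻¹ * lam p R k ^ l (k + 1) < 1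

/-- Condition (3.3) for `k`: for all `2 ≤ j < k`,
`ε_k < ϱ^{k-j} R_k² (R_{j-1} S_{j-1})⁻¹ λ_{j-1}^{-ℓ_j}`. -/
def Cond33 (p : ℕ) (R : ℕ → ℝ) (ε : ℕ → ℝ) (l : ℕ → ℕ) (k : ℕ) : Prop :=
  ∀ j, 2 ≤ j → j < k →
    ε k < rho p ^ (k - j) * R k ^ 2 * (R (j - 1) * Sse p R (j - 1))⁻¹ *
      (lam p R (j - 1) ^ l j)⁻¹

/-- Condition (3.4) for `k`: for all `2 ≤ j ≤ k`,
`ϱ^{-2} R_{j-1} S_{j-1} λ_{j-1}^{ℓ_j} p^{-m_j} < 1`. -/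
def Cond34 (p : ℕ) (R : ℕ → ℝ) (m l : ℕ → ℕ) (k : ℕ) : Prop :=
  ∀ j, 2 ≤ j → j ≤ k →
    ((rho p) ^ 2)⁻¹ * (R (j - 1) * Sse p R (j - 1)) * lam p R (j - 1) ^ l j *
      ((p : ℝ) ^ m j)⁻¹ < 1

/-- Condition (3.5) at `k`: `p ϱ⁻¹ R_{k+1}² S_k⁻¹ λ_k^{-ℓ_{k+1}} < ε_{k+1}`. -/
def Cond35 (p : ℕ) (R : ℕ → ℝ) (ε : ℕ → ℝ) (l : ℕ → ℕ) (k : ℕ) : Prop :=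
  (p : ℝ) * (rho p)⁻¹ * R (k + 1) ^ 2 * (Sse p R k)⁻¹ * (lam p R k ^ l (k + 1))⁻¹ < ε (k + 1)

/-- `c' ∈ Δ_k(c, ε)`. -/
def InDelta (p : ℕ) [Fact p.Prime] {K : Type*} [NormedField K] (R : ℕ → ℝ) (c : ℕ → K)
    (ε : ℕ → ℝ) (k : ℕ) (c' : ℕ → K) : Prop :=
  InC p R c' ∧ (∀ j, 1 ≤ j → j < k → c' j = c j) ∧ ∀ j, k ≤ j → ‖c' j - c j‖ < ε j

/-- `c' ∈ U_k(c, ε)`. -/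
def InU (p : ℕ) [Fact p.Prime] {K : Type*} [NormedField K] (R : ℕ → ℝ) (c : ℕ → K)
    (k : ℕ) (ε : ℝ) (c' : ℕ → K) : Prop :=
  InC p R c' ∧ ‖c' k - c k‖ < ε ∧ ∀ j, 1 ≤ j → j ≠ k → c' j = c j


/-!
Follow the error `‖f^[i] y - f^[i] x‖` through one block `B_0^{m_k} A^{n_k} B_k^{ℓ_{k+1}}` of the
itinerary at a time. On `B_0` the map is `z ↦ z^p/p` up to a factor of norm one, so the error
relative to `‖f^[i] x‖` shrinks by `p` per step; this needs `‖x‖ ≥ ϱ`, which holds because `ϱ` is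
the fixed point of `t ↦ p t^p` and the orbit of `x` does leave `B_0`. On `A` no zero of `f_c` is
close, and the relative error does not grow. On `B_k` the map is `λ_k`-Lipschitz. Condition (3.2)
says exactly that the error at the end of the block is again below `ϱ²`, which starts the next
block. All estimates are ultrametric: the Weierstrass product `∏ (1 - z / c_j)` is controlled
factor by factor, through its maximum modulus.
-/

open Filter Function Topology

section Ultrametric

variable {ι K : Type*}

lemma norm_sub_le_max [SeminormedAddCommGroup K] [IsUltrametricDist K] (x y : K) :
    ‖x - y‖ ≤ max ‖x‖ ‖y‖ := by
  simpa [sub_eq_add_neg] using IsUltrametricDist.norm_add_le_max x (-y)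

lemma norm_eq_of_norm_sub_lt [SeminormedAddCommGroup K] [IsUltrametricDist K] {x y : K}
    (h : ‖y - x‖ < ‖x‖) : ‖y‖ = ‖x‖ := by
  simpa [max_eq_left h.le] using IsUltrametricDist.norm_add_eq_max_of_norm_ne_norm h.ne'

lemma norm_le_of_norm_sub_le [SeminormedAddCommGroup K] [IsUltrametricDist K] {x y : K}
    (h : ‖y - x‖ ≤ ‖x‖) : ‖y‖ ≤ ‖x‖ := by
  simpa using (IsUltrametricDist.norm_add_le_max x (y - x)).trans (max_le le_rfl h)

lemma norm_lt_of_norm_sub_lt [SeminormedAddCommGroup K] [IsUltrametricDist K] {x y : K} {r : ℝ}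
    (hx : ‖x‖ < r) (h : ‖y - x‖ < r) : ‖y‖ < r := by
  simpa using (IsUltrametricDist.norm_add_le_max x (y - x)).trans_lt (max_lt hx h)

variable [NormedCommRing K] [NormOneClass K] [IsUltrametricDist K]

lemma norm_pow_sub_pow_le {x y : K} {t : ℝ} (hx : ‖x‖ ≤ t) (hy : ‖y‖ ≤ t) (n : ℕ) :
    ‖y ^ n - x ^ n‖ ≤ ‖y - x‖ * t ^ (n - 1) := by
  have ht : 0 ≤ t := (norm_nonneg x).trans hx
  rw [← geom_sum₂_mul, mul_comm]
  refine (norm_mul_le _ _).trans (mul_le_mul_of_nonneg_left ?_ (norm_nonneg _))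
  refine IsUltrametricDist.norm_sum_le_of_forall_le_of_nonneg (by positivity) fun i hi => ?_
  calc ‖y ^ i * x ^ (n - 1 - i)‖ ≤ t ^ i * t ^ (n - 1 - i) :=
        (norm_mul_le _ _).trans <| mul_le_mul
          ((norm_pow_le _ _).trans (pow_le_pow_left₀ (norm_nonneg _) hy _))
          ((norm_pow_le _ _).trans (pow_le_pow_left₀ (norm_nonneg _) hx _))
          (norm_nonneg _) (by positivity)
    _ = t ^ (n - 1) := by
        rw [← pow_add]
        congr 1
        have := Finset.mem_range.1 hi
        omega

lemma norm_prod_sub_prod_le {s : Finset ι} {f g : ι → K} {B : ι → ℝ} {ε : ℝ} (hε : 0 ≤ ε)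
    (hf : ∀ i ∈ s, ‖f i‖ ≤ B i) (hg : ∀ i ∈ s, ‖g i‖ ≤ B i)
    (hfg : ∀ i ∈ s, ‖f i - g i‖ ≤ ε * B i) :
    ‖∏ i ∈ s, f i - ∏ i ∈ s, g i‖ ≤ ε * ∏ i ∈ s, B i := by
  classical
  induction s using Finset.cons_induction with
  | empty => simpa using hε
  | cons a s ha ih =>
    simp only [Finset.forall_mem_cons] at hf hg hfg
    have hBa : 0 ≤ B a := (norm_nonneg _).trans hf.1
    have hgs : ‖∏ i ∈ s, g i‖ ≤ ∏ i ∈ s, B i :=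
      (Finset.norm_prod_le _ _).trans (Finset.prod_le_prod (fun _ _ => norm_nonneg _) hg.2)
    rw [Finset.prod_cons, Finset.prod_cons, Finset.prod_cons,
      show f a * ∏ i ∈ s, f i - g a * ∏ i ∈ s, g i
        = f a * (∏ i ∈ s, f i - ∏ i ∈ s, g i) + (f a - g a) * ∏ i ∈ s, g i by ring]
    refine (IsUltrametricDist.norm_add_le_max _ _).trans (max_le ?_ ?_)
    · calc ‖f a * (∏ i ∈ s, f i - ∏ i ∈ s, g i)‖ ≤ B a * (ε * ∏ i ∈ s, B i) :=
            (norm_mul_le _ _).trans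
              (mul_le_mul hf.1 (ih hf.2 hg.2 hfg.2) (norm_nonneg _) hBa)
        _ = ε * (B a * ∏ i ∈ s, B i) := by ring
    · calc ‖(f a - g a) * ∏ i ∈ s, g i‖ ≤ ε * B a * ∏ i ∈ s, B i :=
            (norm_mul_le _ _).trans (mul_le_mul hfg.1 hgs (norm_nonneg _) (by positivity))
        _ = ε * (B a * ∏ i ∈ s, B i) := by ring

end Ultrametric

lemma prod_le_finprod_of_one_le {ι : Type*} {B : ι → ℝ} (hB : ∀ i, 1 ≤ B i)
    (hfin : (mulSupport B).Finite) (s : Finset ι) : ∏ i ∈ s, B i ≤ ∏ᶠ i, B i := by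
  classical
  rw [finprod_eq_prod_of_mulSupport_subset B (s := s ∪ hfin.toFinset) (by simp)]
  exact Finset.prod_le_prod_of_subset_of_one_le Finset.subset_union_left
    (fun i _ => zero_le_one.trans (hB i)) fun i _ _ => hB i

lemma norm_tprod_le_finprod {ι K : Type*} [NormedCommRing K] [NormOneClass K] {f : ι → K}
    {B : ι → ℝ} (hf : Multipliable f) (hB : ∀ i, 1 ≤ B i)
    (hfin : (mulSupport B).Finite) (hfB : ∀ i, ‖f i‖ ≤ B i) : ‖∏' i, f i‖ ≤ ∏ᶠ i, B i :=
  le_of_tendsto' (Filter.Tendsto.norm hf.hasProd) fun s => (Finset.norm_prod_le _ _).trans <|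
    (Finset.prod_le_prod (fun _ _ => norm_nonneg _) fun i _ => hfB i).trans
      (prod_le_finprod_of_one_le hB hfin s)

section InfiniteProduct

variable {ι K : Type*} [NormedCommRing K] [NormOneClass K] [IsUltrametricDist K]
  {f g : ι → K} {B : ι → ℝ}

lemma norm_tprod_sub_tprod_le {ε : ℝ} (hf : Multipliable f) (hg : Multipliable g) (hε : 0 ≤ ε)
    (hB : ∀ i, 1 ≤ B i) (hfin : (mulSupport B).Finite) (hfB : ∀ i, ‖f i‖ ≤ B i)
    (hgB : ∀ i, ‖g i‖ ≤ B i) (hfg : ∀ i, ‖f i - g i‖ ≤ ε * B i) :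
    ‖∏' i, f i - ∏' i, g i‖ ≤ ε * ∏ᶠ i, B i :=
  le_of_tendsto' (Filter.Tendsto.sub hf.hasProd hg.hasProd).norm fun s =>
    (norm_prod_sub_prod_le hε (fun i _ => hfB i) (fun i _ => hgB i) fun i _ => hfg i).trans
      (mul_le_mul_of_nonneg_left (prod_le_finprod_of_one_le hB hfin s) hε)

theorem multipliable_one_sub_of_tendsto_zero [CompleteSpace K] (hf : Tendsto f cofinite (𝓝 0)) :
    Multipliable fun i => 1 - f i := by
  classical
  have hsmall : ∀ η > 0, {i | ¬ ‖f i‖ < η}.Finite := fun η hη =>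
    eventually_cofinite.1 ((tendsto_zero_iff_norm_tendsto_zero.1 hf).eventually (gt_mem_nhds hη))
  have hle_one : ∀ i, ‖f i‖ ≤ 1 → ‖1 - f i‖ ≤ 1 := fun i hi =>
    (norm_sub_le_max _ _).trans (by simpa using hi)
  have hfin : (mulSupport fun i => max 1 ‖1 - f i‖).Finite := (hsmall 1 one_pos).subset
    fun i hi => by
      contrapose! hi
      exact notMem_mulSupport.2 (max_eq_left (hle_one i (not_le.1 hi).le))
  -- `M` bounds all partial products, so the tail set `T` below may be chosen after `M`
  set M := ∏ᶠ i, max 1 ‖1 - f i‖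
  have hM : ∀ s : Finset ι, ‖∏ i ∈ s, (1 - f i)‖ ≤ M := fun s =>
    (Finset.norm_prod_le _ _).trans <|
      (Finset.prod_le_prod (fun _ _ => norm_nonneg _) fun i _ => le_max_right _ _).trans <|
        prod_le_finprod_of_one_le (fun _ => le_max_left _ _) hfin s
  have hM1 : 1 ≤ M := by
    simpa using prod_le_finprod_of_one_le (fun _ => le_max_left _ _) hfin ∅
  refine cauchySeq_tendsto_of_complete (Metric.cauchySeq_iff'.2 fun ε hε => ?_)
  set η := min 1 (ε / (2 * M))
  have hη : 0 < η := lt_min one_pos (by positivity)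
  refine ⟨(hsmall η hη).toFinset, fun s (hs : _ ⊆ s) => ?_⟩
  set T := (hsmall η hη).toFinset
  have hT : ∀ i ∈ s \ T, ‖f i‖ < η := fun i hi => by simpa [T] using (Finset.mem_sdiff.1 hi).2
  have htail : ‖∏ i ∈ s \ T, (1 - f i) - ∏ i ∈ s \ T, (1 : K)‖ ≤ η * ∏ i ∈ s \ T, (1 : ℝ) :=
    norm_prod_sub_prod_le hη.le (fun i hi => hle_one i ((hT i hi).le.trans (min_le_left _ _)))
      (by simp) fun i hi => by simpa using (hT i hi).le
  calc dist (∏ i ∈ s, (1 - f i)) (∏ i ∈ T, (1 - f i))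
      = ‖(∏ i ∈ s \ T, (1 - f i) - ∏ i ∈ s \ T, (1 : K)) * ∏ i ∈ T, (1 - f i)‖ := by
        rw [dist_eq_norm, ← Finset.prod_sdiff hs, Finset.prod_const_one, sub_one_mul]
    _ ≤ η * M := by
        simpa using (norm_mul_le _ _).trans
          (mul_le_mul htail (hM T) (norm_nonneg _) (by simpa using hη.le))
    _ ≤ ε / (2 * M) * M := by gcongr; exact min_le_right _ _
    _ < ε := by field_simp; linarith

end InfiniteProduct

section CanonicalProduct

variable {ι K : Type*} [NormedField K] {a : ι → K}

def canonicalProduct (a : ι → K) (z : K) : K := ∏' i, (1 - z / a i)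

/-- Bounds `‖canonicalProduct a z‖` for `‖z‖ ≤ t`, with equality for `‖z‖ = t` away from the
disks `‖z - a i‖ < ‖a i‖`. -/
def maxModulus (a : ι → K) (t : ℝ) : ℝ := ∏ᶠ i, max 1 (t / ‖a i‖)

lemma finite_mulSupport_max_one_div (ha : Tendsto (fun i => ‖a i‖) cofinite atTop) (t : ℝ) :
    (mulSupport fun i => max 1 (t / ‖a i‖)).Finite :=
  (eventually_cofinite.1 (ha.eventually_ge_atTop t)).subset fun i hi => by
    contrapose! hi
    exact notMem_mulSupport.2 (max_eq_left (div_le_one_of_le₀ (not_lt.1 hi) (norm_nonneg _)))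

lemma one_le_maxModulus (ha : Tendsto (fun i => ‖a i‖) cofinite atTop) (t : ℝ) :
    1 ≤ maxModulus a t := by
  simpa [maxModulus] using prod_le_finprod_of_one_le (fun _ => le_max_left _ _)
    (finite_mulSupport_max_one_div ha t) ∅

lemma maxModulus_eq_one {t : ℝ} (ht : ∀ i, t ≤ ‖a i‖) : maxModulus a t = 1 :=
  finprod_eq_one_of_forall_eq_one fun i => max_eq_left (div_le_one_of_le₀ (ht i) (norm_nonneg _))

variable [IsUltrametricDist K]

lemma norm_one_sub_div_le {z b : K} {t : ℝ} (hz : ‖z‖ ≤ t) : ‖1 - z / b‖ ≤ max 1 (t / ‖b‖) :=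
  (norm_sub_le_max _ _).trans <| by
    rw [norm_one, norm_div]
    gcongr

lemma norm_one_sub_div_eq {z b : K} (h : ‖b‖ ≤ ‖z - b‖) : ‖1 - z / b‖ = max 1 (‖z‖ / ‖b‖) := by
  rcases eq_or_ne b 0 with rfl | hb
  · simp
  have hzb : ‖z - b‖ = max ‖z‖ ‖b‖ := by
    refine le_antisymm (norm_sub_le_max _ _) ?_
    rcases eq_or_ne ‖z‖ ‖b‖ with hzb | hzb
    · simpa [hzb] using h
    · simpa [sub_eq_add_neg] using (IsUltrametricDist.norm_add_eq_max_of_norm_ne_norm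
        (x := z) (y := -b) (by simpa using hzb)).ge
  rw [show 1 - z / b = -((z - b) / b) by field_simp; ring, norm_neg, norm_div, hzb,
    ← max_div_div_right (norm_nonneg _), div_self (norm_ne_zero_iff.2 hb), max_comm]

variable [CompleteSpace K]

lemma multipliable_one_sub_div (ha : Tendsto (fun i => ‖a i‖) cofinite atTop) (z : K) :
    Multipliable fun i => 1 - z / a i := by
  refine multipliable_one_sub_of_tendsto_zero (tendsto_zero_iff_norm_tendsto_zero.2 ?_)
  simpa [div_eq_mul_inv] using (tendsto_inv_atTop_zero.comp ha).const_mul ‖z‖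

lemma norm_canonicalProduct_le (ha : Tendsto (fun i => ‖a i‖) cofinite atTop) {z : K} {t : ℝ}
    (hz : ‖z‖ ≤ t) : ‖canonicalProduct a z‖ ≤ maxModulus a t :=
  norm_tprod_le_finprod (multipliable_one_sub_div ha z) (fun _ => le_max_left _ _)
    (finite_mulSupport_max_one_div ha t) fun _ => norm_one_sub_div_le hz

lemma norm_canonicalProduct_eq (ha : Tendsto (fun i => ‖a i‖) cofinite atTop) {z : K}
    (hz : ∀ i, ‖a i‖ ≤ ‖z - a i‖) : ‖canonicalProduct a z‖ = maxModulus a ‖z‖ := by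
  have hfac : ∀ i, ‖1 - z / a i‖ = max 1 (‖z‖ / ‖a i‖) := fun i => norm_one_sub_div_eq (hz i)
  rw [canonicalProduct, (multipliable_one_sub_div ha z).norm_tprod, tprod_eq_finprod]
  · exact finprod_congr hfac
  · simpa only [HasFiniteMulSupport, hfac] using finite_mulSupport_max_one_div ha ‖z‖

lemma norm_canonicalProduct_eq_one (ha : Tendsto (fun i => ‖a i‖) cofinite atTop) {z : K}
    (hz : ∀ i, ‖z‖ < ‖a i‖) : ‖canonicalProduct a z‖ = 1 := by
  rw [norm_canonicalProduct_eq ha fun i => ?_, maxModulus_eq_one fun i => (hz i).le]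
  rw [norm_sub_rev, norm_eq_of_norm_sub_lt (x := a i) (y := a i - z) (by simpa using hz i)]

lemma norm_canonicalProduct_sub_le (ha : Tendsto (fun i => ‖a i‖) cofinite atTop) {x y : K}
    {t : ℝ} (ht : 0 < t) (hx : ‖x‖ ≤ t) (hy : ‖y‖ ≤ t) :
    ‖canonicalProduct a y - canonicalProduct a x‖ ≤ ‖y - x‖ / t * maxModulus a t := by
  refine norm_tprod_sub_tprod_le (multipliable_one_sub_div ha y) (multipliable_one_sub_div ha x)
    (by positivity) (fun _ => le_max_left _ _) (finite_mulSupport_max_one_div ha t)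
    (fun _ => norm_one_sub_div_le hy) (fun _ => norm_one_sub_div_le hx) fun i => ?_
  calc ‖1 - y / a i - (1 - x / a i)‖ = ‖y - x‖ / t * (t / ‖a i‖) := by
        rw [div_mul_div_cancel₀ ht.ne', ← norm_div, ← norm_neg]
        ring_nf
    _ ≤ ‖y - x‖ / t * max 1 (t / ‖a i‖) := by gcongr; exact le_max_right _ _

end CanonicalProduct

section Rho

variable {p : ℕ}

lemma rho_pos (hp : 1 < p) : 0 < rho p := by
  unfold rho
  have : (0 : ℝ) < p := by exact_mod_cast zero_lt_one.trans hp
  positivity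

lemma rho_lt_one (hp : 1 < p) : rho p < 1 := by
  have hp' : (1 : ℝ) < p := by exact_mod_cast hp
  exact Real.rpow_lt_one_of_one_lt_of_neg hp' (div_neg_of_neg_of_pos (by norm_num) (by linarith))

lemma rho_pow_sub_one (hp : 1 < p) : rho p ^ (p - 1) = (p : ℝ)⁻¹ := by
  have hp' : (1 : ℝ) < p := by exact_mod_cast hp
  rw [rho, ← Real.rpow_natCast, ← Real.rpow_mul (by linarith), Nat.cast_sub hp.le, Nat.cast_one,
    div_mul_cancel₀ _ (by linarith), Real.rpow_neg_one]

lemma natCast_mul_rho_pow (hp : 1 < p) : p * rho p ^ p = rho p := by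
  have hp' : (0 : ℝ) < p := by exact_mod_cast zero_lt_one.trans hp
  rw [← pow_sub_one_mul (by omega), rho_pow_sub_one hp, ← mul_assoc, mul_inv_cancel₀ hp'.ne',
    one_mul]

end Rho

section PowerDifference

variable {p : ℕ} [Fact p.Prime] {K : Type*} [NormedField K] [IsUltrametricDist K]

lemma norm_choose_le (hp : ‖(p : K)‖ = (p : ℝ)⁻¹) {k : ℕ} (hk0 : k ≠ 0) (hkp : k < p) :
    ‖(p.choose k : K)‖ ≤ (p : ℝ)⁻¹ := by
  obtain ⟨d, hd⟩ := (Fact.out : p.Prime).dvd_choose_self hk0 hkp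
  rw [hd, Nat.cast_mul, norm_mul, hp]
  exact mul_le_of_le_one_right (by positivity) (IsUltrametricDist.norm_natCast_le_one K d)

/-- Every binomial term but `(y - x) ^ p` carries a factor `p`; that one is small by the choice
of `ϱ`. -/
lemma norm_pow_sub_pow_le_of_norm_sub_le (hp : ‖(p : K)‖ = (p : ℝ)⁻¹) {x y : K}
    (h : ‖y - x‖ ≤ rho p * ‖x‖) : ‖y ^ p - x ^ p‖ ≤ ‖y - x‖ * ‖x‖ ^ (p - 1) / p := by
  have hp1 := (Fact.out : p.Prime).one_lt
  have hδx : ‖y - x‖ ≤ ‖x‖ := h.trans (mul_le_of_le_one_left (norm_nonneg _) (rho_lt_one hp1).le)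
  have hexp :
      y ^ p - x ^ p = ∑ k ∈ Finset.range p, x ^ k * (y - x) ^ (p - k) * (p.choose k : K) := by
    rw [show y = x + (y - x) by ring, add_pow, Finset.sum_range_succ]
    simp
  rw [hexp]
  refine IsUltrametricDist.norm_sum_le_of_forall_le_of_nonneg (by positivity) fun k hk => ?_
  rw [Finset.mem_range] at hk
  rw [norm_mul, norm_mul, norm_pow, norm_pow]
  rcases Nat.eq_zero_or_pos k with rfl | hk0
  · calc 1 * ‖y - x‖ ^ (p - 0) * ‖((p.choose 0 : ℕ) : K)‖ = ‖y - x‖ * ‖y - x‖ ^ (p - 1) := by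
          simp [← pow_succ', Nat.sub_add_cancel hp1.le]
      _ ≤ ‖y - x‖ * (rho p * ‖x‖) ^ (p - 1) := by gcongr
      _ = ‖y - x‖ * ‖x‖ ^ (p - 1) / p := by rw [mul_pow, rho_pow_sub_one hp1]; ring
  · calc ‖x‖ ^ k * ‖y - x‖ ^ (p - k) * ‖(p.choose k : K)‖
        ≤ ‖x‖ ^ k * (‖x‖ ^ (p - k - 1) * ‖y - x‖) * (p : ℝ)⁻¹ := by
          rw [← pow_sub_one_mul (by omega : p - k ≠ 0)]
          gcongr
          exact norm_choose_le hp hk0.ne' hk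
      _ = ‖y - x‖ * ‖x‖ ^ (p - 1) / p := by
          rw [← mul_assoc, ← pow_add, show k + (p - k - 1) = p - 1 by omega]
          ring

end PowerDifference

section Radii

variable {p : ℕ} {R : ℕ → ℝ}

lemma IsRadii.lt_of_lt (hR : IsRadii p R) {i j : ℕ} (hi : 1 ≤ i) (hij : i < j) : R i < R j := by
  have hmono : StrictMono fun k => R (k + 1) :=
    strictMono_nat_of_lt_succ fun k => hR.1 (k + 1) le_add_self
  simpa [Nat.sub_add_cancel hi, Nat.sub_add_cancel (hi.trans hij.le)] using
    hmono (Nat.sub_lt_sub_right hi hij)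

lemma IsRadii.natCast_lt (hR : IsRadii p R) {j : ℕ} (hj : 1 ≤ j) : (p : ℝ) < R j :=
  hR.2.1.trans_le <|
    (eq_or_lt_of_le hj).elim (fun h => h ▸ le_rfl) fun h => (hR.lt_of_lt le_rfl h).le

lemma IsRadii.one_lt (hR : IsRadii p R) (hp : 1 < p) {j : ℕ} (hj : 1 ≤ j) : 1 < R j :=
  (Nat.one_lt_cast.2 hp).trans (hR.natCast_lt hj)

lemma phi_radius (hR : IsRadii p R) {k : ℕ} (hk : 1 ≤ k) :
    phi p R (R k) = p * (∏ i ∈ Finset.Icc 1 (k - 1), R i)⁻¹ * R k ^ (p + k - 1) := by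
  have : sInf {j | 1 ≤ j ∧ R k ≤ R j} = k :=
    le_antisymm (Nat.sInf_le ⟨hk, le_rfl⟩) <| le_csInf ⟨k, hk, le_rfl⟩ fun j ⟨hj, hkj⟩ =>
      not_lt.1 fun hjk => (hR.lt_of_lt hj hjk).not_ge hkj
  simp only [phi, this]

variable [Fact p.Prime] {K : Type*} [NormedField K] {c : ℕ → K}

lemma InC.tendsto_norm (hR : IsRadii p R) (hc : InC p R c) :
    Tendsto (fun j => ‖c (j + 1)‖) cofinite atTop := by
  rw [Nat.cofinite_eq_atTop]
  simpa only [hc _ (Nat.le_add_left 1 _)] using (tendsto_add_atTop_iff_nat 1).2 hR.2.2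

lemma maxModulus_eq_prod (hR : IsRadii p R) (hc : InC p R c) {k : ℕ} (hk : 1 ≤ k) :
    maxModulus (fun j => c (j + 1)) (R k) = ∏ j ∈ Finset.range k, R k / R (j + 1) := by
  have hpos : ∀ j, 0 < R (j + 1) :=
    fun j => zero_lt_one.trans (hR.one_lt (Fact.out : p.Prime).one_lt le_add_self)
  rw [maxModulus, finprod_eq_prod_of_mulSupport_subset _ (s := Finset.range k) fun j hj => ?_]
  · refine Finset.prod_congr rfl fun j hj => ?_
    rw [hc _ le_add_self, max_eq_right ((one_le_div (hpos j)).2 ?_)]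
    rcases (Nat.succ_le_of_lt (Finset.mem_range.1 hj)).eq_or_lt with h | h
    · rw [← h]
    · exact (hR.lt_of_lt le_add_self h).le
  · contrapose! hj
    rw [Finset.coe_range, Set.mem_Iio, not_lt] at hj
    rw [notMem_mulSupport, hc _ le_add_self]
    exact max_eq_left (div_le_one_of_le₀ (hR.lt_of_lt hk (by omega)).le (hpos j).le)

lemma lam_eq (hR : IsRadii p R) (hc : InC p R c) {k : ℕ} (hk : 1 ≤ k) :
    lam p R k = p * R k ^ (p - 1) * maxModulus (fun j => c (j + 1)) (R k) := by
  have hp := (Fact.out : p.Prime).one_lt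
  obtain ⟨k, rfl⟩ : ∃ k', k = k' + 1 := ⟨k - 1, by omega⟩
  have hpos : ∀ j, 1 ≤ j → 0 < R j := fun j hj => zero_lt_one.trans (hR.one_lt hp hj)
  have hIcc : ∏ i ∈ Finset.Icc 1 k, R i = ∏ j ∈ Finset.range k, R (j + 1) := by
    rw [← Finset.Ico_add_one_right_eq_Icc, Finset.prod_Ico_eq_prod_range, Nat.add_sub_cancel]
    simp only [add_comm 1]
  have hA : 0 < ∏ j ∈ Finset.range k, R (j + 1) := Finset.prod_pos fun j _ => hpos _ le_add_self
  have hRk := hpos (k + 1) le_add_self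
  rw [lam, phi_radius hR hk, maxModulus_eq_prod hR hc hk, Finset.prod_div_distrib,
    Finset.prod_const, Finset.card_range, Finset.prod_range_succ, Nat.add_sub_cancel, hIcc,
    show p + (k + 1) - 1 = (p - 1) + (k + 1) by omega, pow_add]
  field_simp

lemma InC.natCast_le_norm (hR : IsRadii p R) (hc : InC p R c) (j : ℕ) : (p : ℝ) ≤ ‖c (j + 1)‖ :=
  (hc _ le_add_self).symm ▸ (hR.natCast_lt le_add_self).le

lemma one_le_lam (hR : IsRadii p R) (hc : InC p R c) {k : ℕ} (hk : 1 ≤ k) : 1 ≤ lam p R k := by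
  have hp : (1 : ℝ) ≤ p := Nat.one_le_cast.2 (Fact.out : p.Prime).one_lt.le
  rw [lam_eq hR hc hk]
  exact one_le_mul_of_one_le_of_one_le
    (one_le_mul_of_one_le_of_one_le hp (one_le_pow₀ (hR.one_lt (Fact.out : p.Prime).one_lt hk).le))
    (one_le_maxModulus (hc.tendsto_norm hR) _)

end Radii

section Disks

variable {K : Type*} [NormedField K] {R : ℕ → ℝ} {c : ℕ → K} {x y z : K}

lemma mem_Bset_zero : z ∈ Bset R c 0 ↔ ‖z‖ < 1 := by simp [Bset]

lemma mem_Bset {k : ℕ} (hk : k ≠ 0) : z ∈ Bset R c k ↔ ‖z - c k‖ < R k := by simp [Bset, hk]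

lemma notMem_Bset_of_mem_Aset (hz : z ∈ Aset R c) (j : ℕ) : z ∉ Bset R c j :=
  fun hj => hz (Set.mem_iUnion.2 ⟨j, hj⟩)

lemma one_le_norm_of_mem_Aset (hz : z ∈ Aset R c) : 1 ≤ ‖z‖ :=
  not_lt.1 fun h => notMem_Bset_of_mem_Aset hz 0 (mem_Bset_zero.2 h)

variable [IsUltrametricDist K]

lemma norm_eq_of_mem_Bset {k : ℕ} (hk : k ≠ 0) (hc : ‖c k‖ = R k) (hz : z ∈ Bset R c k) :
    ‖z‖ = R k :=
  hc ▸ norm_eq_of_norm_sub_lt (hc ▸ (mem_Bset hk).1 hz)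

lemma mem_Bset_of_norm_sub_lt {k : ℕ} (hk : k ≠ 0) (hx : x ∈ Bset R c k) (h : ‖y - x‖ < R k) :
    y ∈ Bset R c k :=
  (mem_Bset hk).2 (norm_lt_of_norm_sub_lt ((mem_Bset hk).1 hx) (by simpa using h))

/-- `y` has the norm of `x`; if `y ∈ B_j` with `j ≥ 1`, this norm is `R_j`, and then
`‖y - x‖ < R_j` puts `x` in `B_j` as well. -/
lemma mem_Aset_of_norm_sub_lt {p : ℕ} [Fact p.Prime] (hc : InC p R c) (hx : x ∈ Aset R c)
    (h : ‖y - x‖ < ‖x‖) : y ∈ Aset R c := by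
  have hyx := norm_eq_of_norm_sub_lt h
  refine fun hy => ?_
  obtain ⟨j, hj⟩ := Set.mem_iUnion.1 hy
  refine notMem_Bset_of_mem_Aset hx j ?_
  rcases eq_or_ne j 0 with rfl | hj0
  · exact mem_Bset_zero.2 (hyx ▸ mem_Bset_zero.1 hj)
  · have hyj := norm_eq_of_mem_Bset hj0 (hc j (Nat.one_le_iff_ne_zero.2 hj0)) hj
    exact mem_Bset_of_norm_sub_lt hj0 hj (by rw [norm_sub_rev, ← hyj, hyx]; exact h)

end Disks

section EntireMap

variable {p : ℕ} {K : Type*} [NormedField K] {c : ℕ → K}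

lemma fc_eq (z : K) : fc p c z = z ^ p / p * canonicalProduct (fun j => c (j + 1)) z := rfl

lemma fc_sub_fc (x y : K) :
    fc p c y - fc p c x = ((y ^ p - x ^ p) * canonicalProduct (fun j => c (j + 1)) y +
      x ^ p * (canonicalProduct (fun j => c (j + 1)) y -
        canonicalProduct (fun j => c (j + 1)) x)) / p := by
  rw [fc_eq, fc_eq]
  ring

lemma norm_fc (hp : ‖(p : K)‖ = (p : ℝ)⁻¹) (z : K) :
    ‖fc p c z‖ = p * ‖z‖ ^ p * ‖canonicalProduct (fun j => c (j + 1)) z‖ := by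
  rw [fc_eq, norm_mul, norm_div, norm_pow, hp, div_inv_eq_mul, mul_comm (‖z‖ ^ p)]

variable [IsUltrametricDist K]

lemma norm_fc_sub_fc_le (hp : ‖(p : K)‖ = (p : ℝ)⁻¹) (x y : K) :
    ‖fc p c y - fc p c x‖ ≤ p * max (‖y ^ p - x ^ p‖ * ‖canonicalProduct (fun j => c (j + 1)) y‖)
      (‖x‖ ^ p * ‖canonicalProduct (fun j => c (j + 1)) y -
        canonicalProduct (fun j => c (j + 1)) x‖) := by
  rw [fc_sub_fc, norm_div, hp, div_inv_eq_mul, mul_comm]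
  gcongr
  rw [← norm_pow, ← norm_mul, ← norm_mul]
  exact IsUltrametricDist.norm_add_le_max _ _

variable [CompleteSpace K]

lemma norm_fc_of_norm_lt (hp : ‖(p : K)‖ = (p : ℝ)⁻¹)
    (hc : Tendsto (fun j => ‖c (j + 1)‖) cofinite atTop) {z : K} (hz : ∀ j, ‖z‖ < ‖c (j + 1)‖) :
    ‖fc p c z‖ = p * ‖z‖ ^ p := by
  rw [norm_fc hp, norm_canonicalProduct_eq_one hc hz, mul_one]

lemma norm_fc_sub_fc_le_of_norm_le [Fact p.Prime] (hp : ‖(p : K)‖ = (p : ℝ)⁻¹)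
    (hc : Tendsto (fun j => ‖c (j + 1)‖) cofinite atTop) {x y : K} {t : ℝ} (ht : 0 < t)
    (hx : ‖x‖ ≤ t) (hy : ‖y‖ ≤ t) :
    ‖fc p c y - fc p c x‖ ≤ p * t ^ (p - 1) * maxModulus (fun j => c (j + 1)) t * ‖y - x‖ := by
  have hM := one_le_maxModulus hc t
  refine (norm_fc_sub_fc_le hp x y).trans ?_
  rw [mul_assoc (p : ℝ), mul_assoc (p : ℝ)]
  gcongr
  refine max_le ?_ ?_
  · calc _ ≤ ‖y - x‖ * t ^ (p - 1) * maxModulus (fun j => c (j + 1)) t :=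
          mul_le_mul (norm_pow_sub_pow_le hx hy p) (norm_canonicalProduct_le hc hy)
            (norm_nonneg _) (by positivity)
      _ = _ := by ring
  · calc _ ≤ t ^ p * (‖y - x‖ / t * maxModulus (fun j => c (j + 1)) t) := by
          gcongr
          exact norm_canonicalProduct_sub_le hc ht hx hy
      _ = _ := by
          rw [← pow_sub_one_mul (Fact.out : p.Prime).ne_zero]
          field_simp

lemma norm_fc_sub_fc_le_of_norm_lt_one [Fact p.Prime] (hp : ‖(p : K)‖ = (p : ℝ)⁻¹)
    (hc : Tendsto (fun j => ‖c (j + 1)‖) cofinite atTop) (hcp : ∀ j, (p : ℝ) ≤ ‖c (j + 1)‖)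
    {x y : K} (hx : ‖x‖ < 1) (hy : ‖y - x‖ ≤ rho p * ‖x‖) :
    ‖fc p c y - fc p c x‖ ≤ ‖x‖ ^ (p - 1) * ‖y - x‖ := by
  have hp1 : (1 : ℝ) < p := Nat.one_lt_cast.2 (Fact.out : p.Prime).one_lt
  have hyx : ‖y‖ ≤ ‖x‖ := norm_le_of_norm_sub_le <|
    hy.trans (mul_le_of_le_one_left (norm_nonneg _) (rho_lt_one (Fact.out : p.Prime).one_lt).le)
  have hxp : ‖x‖ ≤ p := by linarith
  have hM := maxModulus_eq_one hcp
  refine (norm_fc_sub_fc_le hp x y).trans ?_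
  calc _ ≤ (p : ℝ) * (‖y - x‖ * ‖x‖ ^ (p - 1) / p) := by
        gcongr
        refine max_le ?_ ?_
        · simpa [hM] using mul_le_mul (norm_pow_sub_pow_le_of_norm_sub_le hp hy)
            (norm_canonicalProduct_le hc (hyx.trans hxp)) (norm_nonneg _) (by positivity)
        · calc _ ≤ ‖x‖ ^ (p - 1) * (‖y - x‖ / p * 1) := by
                refine mul_le_mul (pow_le_pow_of_le_one (norm_nonneg _) hx.le (Nat.sub_le p 1))
                  ?_ (norm_nonneg _) (by positivity)
                simpa [hM] using norm_canonicalProduct_sub_le hc (by positivity) hxp (hyx.trans hxp)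
            _ = _ := by ring
    _ = _ := by field_simp

end EntireMap

section Dynamics

variable {p : ℕ} [Fact p.Prime] {K : Type*} [NormedField K] [IsUltrametricDist K]
  [CompleteSpace K] {R : ℕ → ℝ} {c : ℕ → K}

lemma norm_fc_sub_fc_le_of_mem_Aset (hp : ‖(p : K)‖ = (p : ℝ)⁻¹) (hR : IsRadii p R)
    (hc : InC p R c) {x y : K} {e : ℝ} (hx : x ∈ Aset R c) (he : e ≤ 1)
    (hy : ‖y - x‖ ≤ e * ‖x‖) : ‖fc p c y - fc p c x‖ ≤ e * ‖fc p c x‖ := by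
  have hx1 := one_le_norm_of_mem_Aset hx
  have hzeros : ∀ j, ‖c (j + 1)‖ ≤ ‖x - c (j + 1)‖ := fun j => by
    simpa [mem_Bset, hc (j + 1) le_add_self] using notMem_Bset_of_mem_Aset hx (j + 1)
  rw [norm_fc hp, norm_canonicalProduct_eq (hc.tendsto_norm hR) hzeros]
  calc ‖fc p c y - fc p c x‖
      ≤ p * ‖x‖ ^ (p - 1) * maxModulus (fun j => c (j + 1)) ‖x‖ * ‖y - x‖ :=
        norm_fc_sub_fc_le_of_norm_le hp (hc.tendsto_norm hR) (by linarith) le_rfl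
          (norm_le_of_norm_sub_le (hy.trans (mul_le_of_le_one_left (by linarith) he)))
    _ ≤ p * ‖x‖ ^ (p - 1) * maxModulus (fun j => c (j + 1)) ‖x‖ * (e * ‖x‖) := by
        have := one_le_maxModulus (hc.tendsto_norm hR) ‖x‖
        gcongr
    _ = e * (p * ‖x‖ ^ p * maxModulus (fun j => c (j + 1)) ‖x‖) := by
        rw [← pow_sub_one_mul (Fact.out : p.Prime).ne_zero]
        ring

lemma norm_fc_sub_fc_le_of_mem_Bset (hp : ‖(p : K)‖ = (p : ℝ)⁻¹) (hR : IsRadii p R)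
    (hc : InC p R c) {k : ℕ} (hk : 1 ≤ k) {x y : K} (hx : x ∈ Bset R c k)
    (hy : y ∈ Bset R c k) : ‖fc p c y - fc p c x‖ ≤ lam p R k * ‖y - x‖ := by
  have hk0 : k ≠ 0 := Nat.one_le_iff_ne_zero.1 hk
  rw [lam_eq hR hc hk]
  exact norm_fc_sub_fc_le_of_norm_le hp (hc.tendsto_norm hR)
    (zero_lt_one.trans (hR.one_lt (Fact.out : p.Prime).one_lt hk))
    (norm_eq_of_mem_Bset hk0 (hc k hk) hx).le (norm_eq_of_mem_Bset hk0 (hc k hk) hy).le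

lemma norm_fc_of_norm_lt_one (hp : ‖(p : K)‖ = (p : ℝ)⁻¹) (hR : IsRadii p R) (hc : InC p R c)
    {z : K} (hz : ‖z‖ < 1) : ‖fc p c z‖ = p * ‖z‖ ^ p :=
  norm_fc_of_norm_lt hp (hc.tendsto_norm hR) fun j =>
    hz.trans ((Nat.one_lt_cast.2 (Fact.out : p.Prime).one_lt).trans_le (hc.natCast_le_norm hR j))

/-- `ϱ` is the fixed point of `t ↦ p t ^ p`, the radial part of `f_c` on the unit disk. -/
lemma norm_iterate_fc_lt_rho (hp : ‖(p : K)‖ = (p : ℝ)⁻¹) (hR : IsRadii p R) (hc : InC p R c)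
    {x : K} (hx : ‖x‖ < rho p) (n : ℕ) : ‖(fc p c)^[n] x‖ < rho p := by
  have hp1 := (Fact.out : p.Prime).one_lt
  induction n with
  | zero => exact hx
  | succ n ih =>
    rw [Function.iterate_succ_apply', norm_fc_of_norm_lt_one hp hR hc (ih.trans (rho_lt_one hp1)),
      ← natCast_mul_rho_pow hp1]
    gcongr

lemma fc_shadowing_of_norm_lt_one (hp : ‖(p : K)‖ = (p : ℝ)⁻¹) (hR : IsRadii p R)
    (hc : InC p R c) {x y : K} {m : ℕ} (hx : ∀ i < m, ‖(fc p c)^[i] x‖ < 1)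
    (hρx : rho p ≤ ‖x‖) (hy : ‖y - x‖ < rho p ^ 2) :
    (∀ i < m, ‖(fc p c)^[i] y‖ < 1) ∧ ‖(fc p c)^[m] y - (fc p c)^[m] x‖ ≤
      ‖y - x‖ / (rho p * p ^ m) * ‖(fc p c)^[m] x‖ := by
  have hp1 := (Fact.out : p.Prime).one_lt
  have hρ := rho_pos hp1
  have hs : ∀ i, ‖y - x‖ / (rho p * p ^ i) ≤ rho p := fun i => by
    rw [div_le_iff₀ (by positivity)]
    calc ‖y - x‖ ≤ rho p * rho p * 1 := by nlinarith
      _ ≤ rho p * (rho p * p ^ i) := by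
        rw [mul_assoc]
        gcongr
        exact one_le_pow₀ (Nat.one_le_cast.2 hp1.le)
  have hbound : ∀ i ≤ m, ‖(fc p c)^[i] y - (fc p c)^[i] x‖ ≤
      ‖y - x‖ / (rho p * p ^ i) * ‖(fc p c)^[i] x‖ := by
    intro i hi
    induction i with
    | zero =>
      rw [Function.iterate_zero_apply, Function.iterate_zero_apply, pow_zero, mul_one,
        div_mul_eq_mul_div, le_div_iff₀ hρ]
      gcongr
    | succ i ih =>
      set X := (fc p c)^[i] x
      set Y := (fc p c)^[i] y
      have hX : ‖X‖ < 1 := hx i (by omega)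
      have hδ : ‖Y - X‖ ≤ ‖y - x‖ / (rho p * p ^ i) * ‖X‖ := ih (by omega)
      rw [Function.iterate_succ_apply', Function.iterate_succ_apply',
        norm_fc_of_norm_lt_one hp hR hc hX]
      calc ‖fc p c Y - fc p c X‖ ≤ ‖X‖ ^ (p - 1) * ‖Y - X‖ :=
            norm_fc_sub_fc_le_of_norm_lt_one hp (hc.tendsto_norm hR) (hc.natCast_le_norm hR) hX
              (hδ.trans (by gcongr; exact hs i))
        _ ≤ ‖X‖ ^ (p - 1) * (‖y - x‖ / (rho p * p ^ i) * ‖X‖) := by gcongr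
        _ = ‖y - x‖ / (rho p * p ^ (i + 1)) * (p * ‖X‖ ^ p) := by
            rw [← pow_sub_one_mul (Fact.out : p.Prime).ne_zero, pow_succ]
            field_simp
  refine ⟨fun i hi => norm_lt_of_norm_sub_lt (hx i hi) ((hbound i hi.le).trans_lt ?_),
    hbound m le_rfl⟩
  calc _ ≤ rho p * 1 := by gcongr; exacts [hs i, (hx i hi).le]
    _ < 1 := by simpa using rho_lt_one hp1

lemma fc_shadowing_of_mem_Aset (hp : ‖(p : K)‖ = (p : ℝ)⁻¹) (hR : IsRadii p R)
    (hc : InC p R c) {x y : K} {n : ℕ} {e : ℝ} (hx : ∀ i < n, (fc p c)^[i] x ∈ Aset R c)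
    (he : e < 1) (hy : ‖y - x‖ ≤ e * ‖x‖) :
    (∀ i < n, (fc p c)^[i] y ∈ Aset R c) ∧
      ‖(fc p c)^[n] y - (fc p c)^[n] x‖ ≤ e * ‖(fc p c)^[n] x‖ := by
  have hbound : ∀ i ≤ n, ‖(fc p c)^[i] y - (fc p c)^[i] x‖ ≤ e * ‖(fc p c)^[i] x‖ := by
    intro i hi
    induction i with
    | zero => simpa using hy
    | succ i ih =>
      rw [Function.iterate_succ_apply', Function.iterate_succ_apply']
      exact norm_fc_sub_fc_le_of_mem_Aset hp hR hc (hx i (by omega)) he.le (ih (by omega))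
  refine ⟨fun i hi => mem_Aset_of_norm_sub_lt hc (hx i hi) ((hbound i hi.le).trans_lt ?_),
    hbound n le_rfl⟩
  exact mul_lt_of_lt_one_left (zero_lt_one.trans_le (one_le_norm_of_mem_Aset (hx i hi))) he

lemma fc_shadowing_of_mem_Bset (hp : ‖(p : K)‖ = (p : ℝ)⁻¹) (hR : IsRadii p R)
    (hc : InC p R c) {k : ℕ} (hk : 1 ≤ k) {x y : K} {ℓ : ℕ}
    (hx : ∀ i < ℓ, (fc p c)^[i] x ∈ Bset R c k) (hy : lam p R k ^ ℓ * ‖y - x‖ < R k) :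
    (∀ i < ℓ, (fc p c)^[i] y ∈ Bset R c k) ∧
      ‖(fc p c)^[ℓ] y - (fc p c)^[ℓ] x‖ ≤ lam p R k ^ ℓ * ‖y - x‖ := by
  have hlam := one_le_lam hR hc hk
  have hmem : ∀ i < ℓ, ‖(fc p c)^[i] y - (fc p c)^[i] x‖ ≤ lam p R k ^ i * ‖y - x‖ →
      (fc p c)^[i] y ∈ Bset R c k := fun i hi hδ =>
    mem_Bset_of_norm_sub_lt (Nat.one_le_iff_ne_zero.1 hk) (hx i hi) <|
      hδ.trans_lt <| lt_of_le_of_lt (by gcongr) hy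
  have hbound : ∀ i ≤ ℓ, ‖(fc p c)^[i] y - (fc p c)^[i] x‖ ≤ lam p R k ^ i * ‖y - x‖ := by
    intro i hi
    induction i with
    | zero => simp
    | succ i ih =>
      rw [Function.iterate_succ_apply', Function.iterate_succ_apply', pow_succ', mul_assoc]
      refine (norm_fc_sub_fc_le_of_mem_Bset hp hR hc hk (hx i (by omega))
        (hmem i (by omega) (ih (by omega)))).trans ?_
      exact mul_le_mul_of_nonneg_left (ih (by omega)) (zero_le_one.trans hlam)
  exact ⟨fun i hi => hmem i hi (hbound i hi.le), hbound ℓ le_rfl⟩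

end Dynamics

section Block

/-- The `j`-th letter of the word `B_0^m A^n B_k^ℓ`, in the encoding of `itin`. -/
def blockSymbol (m n k j : ℕ) : Option ℕ :=
  if j < m then some 0 else if j < m + n then none else some k

variable {p : ℕ} [Fact p.Prime] {K : Type*} [NormedField K] {R : ℕ → ℝ} {c : ℕ → K}

lemma iterate_mem_blockSymbol_iff (g : K → K) (z : K) (m n k ℓ : ℕ) :
    (∀ j < m + n + ℓ, g^[j] z ∈ symbSet R c (blockSymbol m n k j)) ↔
      (∀ i < m, ‖g^[i] z‖ < 1) ∧ (∀ i < n, g^[i] (g^[m] z) ∈ Aset R c) ∧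
        ∀ i < ℓ, g^[i] (g^[m + n] z) ∈ Bset R c k := by
  simp only [← Function.iterate_add_apply]
  constructor
  · intro h
    refine ⟨fun i hi => ?_, fun i hi => ?_, fun i hi => ?_⟩
    · simpa [blockSymbol, symbSet, hi, mem_Bset_zero] using h i (by omega)
    · simpa [blockSymbol, symbSet, show ¬ i + m < m by omega, show i + m < m + n by omega]
        using h (i + m) (by omega)
    · simpa [blockSymbol, symbSet, show ¬ i + (m + n) < m by omega,
        show ¬ i + (m + n) < m + n by omega] using h (i + (m + n)) (by omega)
  · rintro ⟨h0, hA, hB⟩ j hj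
    unfold blockSymbol
    split_ifs with h1 h2
    · exact mem_Bset_zero.2 (h0 j h1)
    · simpa [symbSet, Nat.sub_add_cancel (not_lt.1 h1)] using hA (j - m) (by omega)
    · simpa [symbSet, Nat.sub_add_cancel (not_lt.1 h2)] using hB (j - (m + n)) (by omega)

variable [IsUltrametricDist K] [CompleteSpace K]

theorem fc_shadowing_block (hp : ‖(p : K)‖ = (p : ℝ)⁻¹) (hR : IsRadii p R) (hc : InC p R c)
    {m n k ℓ : ℕ} (hk : 1 ≤ k) (hℓ : 1 ≤ ℓ)
    (hcond : (rho p)⁻¹ * R k * ((p : ℝ) ^ m)⁻¹ * lam p R k ^ ℓ < 1) {x y : K}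
    (hx : ∀ j < m + n + ℓ, (fc p c)^[j] x ∈ symbSet R c (blockSymbol m n k j))
    (hy : ‖y - x‖ < rho p ^ 2) :
    (∀ j < m + n + ℓ, (fc p c)^[j] y ∈ symbSet R c (blockSymbol m n k j)) ∧
      ‖(fc p c)^[m + n + ℓ] y - (fc p c)^[m + n + ℓ] x‖ < rho p ^ 2 := by
  have hp1 := (Fact.out : p.Prime).one_lt
  have hρ := rho_pos hp1
  have hρ1 := rho_lt_one hp1
  rw [iterate_mem_blockSymbol_iff] at hx ⊢
  obtain ⟨hx0, hxA, hxB⟩ := hx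
  have hxk : ‖(fc p c)^[m + n] x‖ = R k :=
    norm_eq_of_mem_Bset (by omega) (hc k hk) (by simpa using hxB 0 hℓ)
  have hexit : 1 ≤ ‖(fc p c)^[m] x‖ := by
    rcases n.eq_zero_or_pos with rfl | hn
    · exact hxk ▸ (hR.one_lt hp1 hk).le
    · simpa using one_le_norm_of_mem_Aset (hxA 0 hn)
  have hρx : rho p ≤ ‖x‖ := not_lt.1 fun h =>
    (norm_iterate_fc_lt_rho hp hR hc h m).not_ge (hρ1.le.trans hexit)
  obtain ⟨hy0, h1⟩ := fc_shadowing_of_norm_lt_one hp hR hc hx0 hρx hy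
  set e := ‖y - x‖ / (rho p * p ^ m)
  have he : e < 1 :=
    calc e ≤ ‖y - x‖ / rho p := div_le_div_of_nonneg_left (norm_nonneg _) hρ
          (le_mul_of_one_le_right hρ.le (one_le_pow₀ (Nat.one_le_cast.2 hp1.le)))
      _ < rho p := by rw [div_lt_iff₀ hρ, ← sq]; exact hy
      _ < 1 := hρ1
  obtain ⟨hyA, h2⟩ := fc_shadowing_of_mem_Aset hp hR hc hxA he h1
  rw [← Function.iterate_add_apply, ← Function.iterate_add_apply, add_comm n, hxk] at h2
  have hsmall : lam p R k ^ ℓ * (e * R k) < rho p ^ 2 :=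
    calc lam p R k ^ ℓ * (e * R k)
        = ‖y - x‖ * ((rho p)⁻¹ * R k * ((p : ℝ) ^ m)⁻¹ * lam p R k ^ ℓ) := by
          simp only [e]
          field_simp
      _ ≤ ‖y - x‖ := mul_le_of_le_one_right (norm_nonneg _) hcond.le
      _ < rho p ^ 2 := hy
  have h2' := (mul_le_mul_of_nonneg_left h2
    (pow_nonneg (zero_le_one.trans (one_le_lam hR hc hk)) ℓ)).trans_lt hsmall
  have hρR : rho p ^ 2 < R k := (pow_lt_one₀ hρ.le hρ1 two_ne_zero).trans (hR.one_lt hp1 hk)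
  obtain ⟨hyB, h3⟩ := fc_shadowing_of_mem_Bset hp hR hc hk hxB (h2'.trans hρR)
  refine ⟨⟨hy0, hyA, hyB⟩, ?_⟩
  rw [add_comm (m + n), Function.iterate_add_apply _ ℓ (m + n) x,
    Function.iterate_add_apply _ ℓ (m + n) y]
  exact h3.trans_lt h2'

end Block

section Itinerary

variable {m n l : ℕ → ℕ}

lemma Lseq_succ (m n l : ℕ → ℕ) {k : ℕ} (hk : 1 ≤ k) :
    Lseq m n l (k + 1) = Lseq m n l k + m k + n k + l (k + 1) := by
  obtain ⟨k, rfl⟩ : ∃ k', k = k' + 1 := ⟨k - 1, by omega⟩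
  rfl

lemma iterate_Lseq_succ {α : Type*} {g : α → α} {z : α} {k : ℕ} (hk : 1 ≤ k) :
    g^[Lseq m n l (k + 1)] z = g^[m k + n k + l (k + 1)] (g^[Lseq m n l k] z) := by
  rw [← Function.iterate_add_apply, Lseq_succ m n l hk]
  ring_nf

lemma Lseq_le_Lseq {a b : ℕ} (ha : 1 ≤ a) (hab : a ≤ b) :
    Lseq m n l a ≤ Lseq m n l b := by
  have hmono : Monotone fun k => Lseq m n l (k + 1) := monotone_nat_of_le_succ fun k => by
    rw [Lseq_succ m n l le_add_self]
    omega
  simpa [Nat.sub_add_cancel ha, Nat.sub_add_cancel (ha.trans hab)] using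
    hmono (Nat.sub_le_sub_right hab 1)

lemma exists_eq_Lseq_add (hm : ∀ j, 1 ≤ j → 1 ≤ m j) (i : ℕ) :
    ∃ k, 1 ≤ k ∧ ∃ j < m k + n k + l (k + 1), i = Lseq m n l k + j := by
  induction i with
  | zero => exact ⟨1, le_rfl, 0, by have := hm 1 le_rfl; omega, rfl⟩
  | succ i ih =>
    obtain ⟨k, hk, j, hj, rfl⟩ := ih
    by_cases hj' : j + 1 < m k + n k + l (k + 1)
    · exact ⟨k, hk, j + 1, hj', rfl⟩
    · refine ⟨k + 1, le_add_self, 0, by have := hm (k + 1) le_add_self; omega, ?_⟩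
      rw [Lseq_succ m n l hk]
      omega

lemma itin_Lseq_add {k j : ℕ} (hk : 1 ≤ k)
    (hj : j < m k + n k + l (k + 1)) :
    itin m n l (Lseq m n l k + j) = blockSymbol (m k) (n k) k j := by
  have hsup : sSup {k' | 1 ≤ k' ∧ Lseq m n l k' ≤ Lseq m n l k + j} = k := by
    refine IsGreatest.csSup_eq ⟨⟨hk, le_self_add⟩, fun k' ⟨_, hle⟩ => not_lt.1 fun hlt => ?_⟩
    have := Lseq_le_Lseq (m := m) (n := n) (l := l) (le_add_self : 1 ≤ k + 1) hlt
    rw [Lseq_succ m n l hk] at this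
    omega
  simp only [itin, hsup, blockSymbol, add_assoc, Nat.add_lt_add_iff_left]

end Itinerary

/-- **Lemma 3.5** (Uniform disk). If condition (3.2) holds at every `k ≥ 1` and a point
`x` lies in the cylinder `C_c(α)` of the itinerary `α` associated to `m` and `ℓ`, then the
whole disk `{|y - x| < ϱ²}` is contained in `C_c(α)`. -/
theorem uniform_disk
    (p : ℕ) [Fact p.Prime] (K : Type*) [NontriviallyNormedField K] [Algebra ℚ_[p] K]
    (hK : IsCp p K) (R : ℕ → ℝ) (hR : IsGenericRadii p R)
    (m : ℕ → ℕ) (hm : ∀ j, 1 ≤ j → 1 ≤ m j)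
    (l : ℕ → ℕ) (hl : ∀ j, 2 ≤ j → 1 ≤ l j)
    (h32 : ∀ k, 1 ≤ k → Cond32 p R m l k)
    (c : ℕ → K) (hc : InC p R c) (x : K)
    (hx : ∀ i : ℕ, (fc p c)^[i] x ∈ symbSet R c (itin m (nseq p R) l i)) :
    ∀ y : K, ‖y - x‖ < rho p ^ 2 →
      ∀ i : ℕ, (fc p c)^[i] y ∈ symbSet R c (itin m (nseq p R) l i) := by
  have : IsUltrametricDist K := .isUltrametricDist_of_forall_norm_add_le_max_norm hK.isNonarch
  have : CompleteSpace K := hK.complete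
  have hp : ‖(p : K)‖ = (p : ℝ)⁻¹ := by
    rw [← map_natCast (algebraMap ℚ_[p] K), hK.norm_extends, Padic.norm_p]
  intro y hy
  set L := Lseq m (nseq p R) l
  have hxk : ∀ k, 1 ≤ k → ∀ j < m k + nseq p R k + l (k + 1),
      (fc p c)^[j] ((fc p c)^[L k] x) ∈ symbSet R c (blockSymbol (m k) (nseq p R k) k j) :=
    fun k hk j hj => by
      simpa only [← itin_Lseq_add hk hj, ← Function.iterate_add_apply, add_comm j] using
        hx (L k + j)
  have hblock := fun k (hk : 1 ≤ k) => fc_shadowing_block hp hR.1 hc hk (hl (k + 1) (by omega))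
    (h32 k hk) (hxk k hk) (y := (fc p c)^[L k] y)
  have hdist : ∀ k, 1 ≤ k → ‖(fc p c)^[L k] y - (fc p c)^[L k] x‖ < rho p ^ 2 := by
    intro k hk
    induction k, hk using Nat.le_induction with
    | base => simpa [L, Lseq] using hy
    | succ k hk ih => simpa only [L, iterate_Lseq_succ hk] using (hblock k hk ih).2
  intro i
  obtain ⟨k, hk, j, hj, rfl⟩ := exists_eq_Lseq_add (n := nseq p R) (l := l) hm i
  rw [itin_Lseq_add hk hj, add_comm, Function.iterate_add_apply]
  exact (hblock k hk (hdist k hk)).1 j hj
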